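/- arXiv:1412.4419 — 2 statements merged into one kernel-verified Lean document; each statement's English description precedes it below -/
import Mathlib

section
/- Let G, U : ℕ → M₂(ℂ) satisfy G_0 = U_0 = I and ∑_{j=0}^{n} G_j·U_{n−j} = 0 for all n ≥ 1, and define Z_{k,l} := −∑_{j=0}^{k} G_j·U_{k+l+1−j}. Suppose W : ℕ × ℕ → M₂(ℂ) satisfies the recursion W_{k+1,l} − W_{k,l+1} = W_{k,0}·W_{0,l} for all k, l ≥ 0 together with the boundary data W_{k,0} = G_{k+1} and W_{0,l} = −U_{l+1} for all k, l ≥ 0. Then W_{k,l} = Z_{k,l} for all k, l ≥ 0. -/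
/-!
Induction on `k`: the recursion expresses row `k + 1` through row `k` and the boundary data
alone, so it has at most one solution with prescribed row `0`. The explicit coordinates `Z`
solve it, since splitting off the term `j = k + 1` of the sum for `Z (k + 1) l` leaves
`Z k (l + 1) - G (k + 1) * U (l + 1)`.
-/

open Finset

theorem eq_of_succ_left_eq_add {α : Type*} [Add α] {W V F : ℕ → ℕ → α}
    (hW : ∀ k l, W (k + 1) l = W k (l + 1) + F k l)
    (hV : ∀ k l, V (k + 1) l = V k (l + 1) + F k l)
    (h0 : ∀ l, W 0 l = V 0 l) :
    ∀ k l, W k l = V k l := by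
  intro k
  induction k with
  | zero => exact h0
  | succ k ih => intro l; rw [hW, hV, ih]

section AffineCoord

variable {R : Type*} [Ring R] (G U : ℕ → R)

def affineCoord (k l : ℕ) : R :=
  -∑ j ∈ range (k + 1), G j * U (k + l + 1 - j)

theorem affineCoord_zero_left (hG0 : G 0 = 1) (l : ℕ) :
    affineCoord G U 0 l = -U (l + 1) := by
  simp [affineCoord, hG0]

theorem affineCoord_succ_left (k l : ℕ) :
    affineCoord G U (k + 1) l = affineCoord G U k (l + 1) + -(G (k + 1) * U (l + 1)) := by
  have hlast : k + 1 + l + 1 - (k + 1) = l + 1 := by omega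
  have hshift : ∀ j ∈ range (k + 1), G j * U (k + 1 + l + 1 - j) = G j * U (k + (l + 1) + 1 - j) :=
    fun j _ => by rw [show k + 1 + l + 1 - j = k + (l + 1) + 1 - j by omega]
  rw [affineCoord, affineCoord, sum_range_succ, sum_congr rfl hshift, hlast, neg_add]

end AffineCoord

theorem matrix_affine_coordinates_unique_general
    (G U : ℕ → Matrix (Fin 2) (Fin 2) ℂ)
    (hG0 : G 0 = 1)
    (Z : ℕ → ℕ → Matrix (Fin 2) (Fin 2) ℂ)
    (hZ : ∀ k l : ℕ, Z k l = -∑ j ∈ Finset.range (k + 1), G j * U (k + l + 1 - j))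
    (W : ℕ → ℕ → Matrix (Fin 2) (Fin 2) ℂ)
    (hWrec : ∀ k l : ℕ, W (k + 1) l - W k (l + 1) = W k 0 * W 0 l)
    (hWG : ∀ k : ℕ, W k 0 = G (k + 1))
    (hWU : ∀ l : ℕ, W 0 l = -U (l + 1)) :
    ∀ k l : ℕ, W k l = Z k l := by
  have hZ' : Z = affineCoord G U := funext₂ hZ
  subst hZ'
  refine eq_of_succ_left_eq_add (F := fun k l => -(G (k + 1) * U (l + 1))) ?_
    (affineCoord_succ_left G U) fun l => by rw [hWU, affineCoord_zero_left G U hG0]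
  intro k l
  rw [← sub_eq_iff_eq_add', hWrec, hWG, hWU, mul_neg]

/-- Uniqueness: the matrix-valued affine coordinates are uniquely specified by
the recursion relation together with the boundary data. -/
theorem matrix_affine_coordinates_unique
    (G U : ℕ → Matrix (Fin 2) (Fin 2) ℂ)
    (hG0 : G 0 = 1) (hU0 : U 0 = 1)
    (hinv : ∀ n : ℕ, 1 ≤ n → ∑ j ∈ Finset.range (n + 1), G j * U (n - j) = 0)
    (Z : ℕ → ℕ → Matrix (Fin 2) (Fin 2) ℂ)
    (hZ : ∀ k l : ℕ, Z k l = -∑ j ∈ Finset.range (k + 1), G j * U (k + l + 1 - j))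
    (W : ℕ → ℕ → Matrix (Fin 2) (Fin 2) ℂ)
    (hWrec : ∀ k l : ℕ, W (k + 1) l - W k (l + 1) = W k 0 * W 0 l)
    (hWG : ∀ k : ℕ, W k 0 = G (k + 1))
    (hWU : ∀ l : ℕ, W 0 l = -U (l + 1)) :
    ∀ k l : ℕ, W k l = Z k l :=
  matrix_affine_coordinates_unique_general G U hG0 Z hZ W hWrec hWG hWU
end

section
/- Let G(x) ∈ M₂(ℂ[[x]]) be the matrix of formal power series with entries G(x)_{11} = ∑_{k≥0} c_{2k}·x^{3k}, G(x)_{12} = ∑_{k≥0} q_{2k+1}·x^{3k+1}, G(x)_{21} = ∑_{k≥0} c_{2k+1}·x^{3k+2}, G(x)_{22} = ∑_{k≥0} q_{2k}·x^{3k}, where c_k, q_k are as in the context. Then det G(x) = 1 as a formal power series. -/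
/-!
Let `C = ∑ cₖ tᵏ` and `Q = ∑ qₖ tᵏ`. The recurrences for `cₖ` and `qₖ` say that `C` and `Q` solve
the first-order system `2Q = (2 + t)C + 6t²C'`, `2C = (2 - t)Q + 6t²Q'`: formally, these are the
asymptotic expansions of `Ai` and `-Ai'` at infinity in the variable `t = 1/ζ`, `ζ = (2/3) z^{3/2}`.
Hence the Wronskian `W(t) = C(t)Q(-t) + C(-t)Q(t)` (that of `Ai` and `Bi`) satisfies `t²W' = 0`,
so `W = W(0) = 2`. Writing `C = E_c(t²) + t O_c(t²)` and `Q = E_q(t²) + t O_q(t²)` gives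
`W(t) = 2 (E_c E_q - t O_c O_q)(t²)`, hence `E_c E_q - t O_c O_q = 1`, and `det G(x)` is this
series evaluated at `t = x³`.
-/

/-- `c_k := ((-1)^k/288^k)·(6k)!/((3k)!(2k)!)`. -/
noncomputable def cWK (k : ℕ) : ℂ :=
  ((-1) ^ k / 288 ^ k) * ((6 * k).factorial : ℂ) /
    (((3 * k).factorial : ℂ) * ((2 * k).factorial : ℂ))

/-- `q_k := ((1+6k)/(1-6k))·c_k`. -/
noncomputable def qWK (k : ℕ) : ℂ :=
  ((1 + 6 * (k : ℂ)) / (1 - 6 * (k : ℂ))) * cWK k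

namespace PowerSeries

instance instCharZero {R : Type*} [Semiring R] [CharZero R] : CharZero R⟦X⟧ :=
  charZero_of_injective_ringHom C_injective

theorem coeff_X_mul_derivative {R : Type*} [CommSemiring R] (f : R⟦X⟧) (n : ℕ) :
    coeff n (X * d⁄dX R f) = n * coeff n f := by
  cases n with
  | zero => simp
  | succ n => rw [coeff_succ_X_mul, coeff_derivative, mul_comm]; push_cast; rfl

section CommRing

variable {R : Type*} [CommRing R]

theorem coeff_X_pow_mul_expand {p r : ℕ} (hp : p ≠ 0) (hr : r < p) (g : R⟦X⟧) (n : ℕ) :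
    coeff n (X ^ r * expand p hp g) = if n % p = r then coeff (n / p) g else 0 := by
  rw [coeff_X_pow_mul', coeff_expand]
  have hmod (hrn : r ≤ n) : p ∣ n - r ↔ n % p = r := by
    rw [← Nat.modEq_iff_dvd' hrn, Nat.ModEq, Nat.mod_eq_of_lt hr, eq_comm]
  by_cases h : n % p = r
  · have hrn : r ≤ n := h ▸ Nat.mod_le n p
    have hsub : n - r = p * (n / p) := by
      have := Nat.div_add_mod n p
      omega
    rw [if_pos hrn, if_pos ((hmod hrn).mpr h), if_pos h, hsub, Nat.mul_div_cancel_left _ hp.bot_lt]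
  · rw [if_neg h]
    split_ifs with hrn hdvd
    · exact absurd ((hmod hrn).mp hdvd) h
    all_goals rfl

theorem eq_X_pow_mul_expand_mk {p r : ℕ} (hp : p ≠ 0) (hr : r < p) {g : R⟦X⟧} {f : ℕ → R}
    (hg : ∀ n, coeff n g = if n % p = r then f (n / p) else 0) :
    g = X ^ r * expand p hp (mk f) := by
  ext n
  rw [hg, coeff_X_pow_mul_expand hp hr, coeff_mk]

theorem expand_injective {p : ℕ} (hp : p ≠ 0) : Function.Injective (expand p hp (R := R)) :=
  fun f g h => by
    ext m
    rw [← coeff_expand_mul p hp f, h, coeff_expand_mul]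

theorem rescale_neg_one_expand_two (g : R⟦X⟧) :
    rescale (-1) (expand 2 two_ne_zero g) = expand 2 two_ne_zero g := by
  ext n
  rw [coeff_rescale, coeff_expand]
  split_ifs with h
  · rw [(even_iff_two_dvd.mpr h).neg_one_pow, one_mul]
  · rw [mul_zero]

noncomputable def evenSeries (f : ℕ → R) : R⟦X⟧ := mk fun k => f (2 * k)

noncomputable def oddSeries (f : ℕ → R) : R⟦X⟧ := mk fun k => f (2 * k + 1)

theorem mk_eq_expand_evenSeries_add_X_mul (f : ℕ → R) :
    mk f = expand 2 two_ne_zero (evenSeries f) + X * expand 2 two_ne_zero (oddSeries f) := by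
  ext n
  have h0 := coeff_X_pow_mul_expand two_ne_zero two_pos (evenSeries f) n
  have h1 := coeff_X_pow_mul_expand two_ne_zero one_lt_two (oddSeries f) n
  rw [pow_zero, one_mul] at h0
  rw [pow_one] at h1
  rw [map_add, h0, h1, coeff_mk, evenSeries, oddSeries, coeff_mk, coeff_mk]
  rcases Nat.mod_two_eq_zero_or_one n with h | h
  · rw [if_pos h, if_neg (by omega), add_zero, Nat.mul_div_cancel' (Nat.dvd_of_mod_eq_zero h)]
  · rw [if_neg (by omega), if_pos h, zero_add]
    congr
    omega

end CommRing

end PowerSeries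

open PowerSeries

lemma mul_cWK_succ (k : ℕ) :
    24 * ((k : ℂ) + 1) * cWK (k + 1) = -((6 * k + 1) * (6 * k + 5)) * cWK k := by
  have key : 24 * ((k : ℂ) + 1) * (6 * (k + 1)).factorial * (3 * k).factorial * (2 * k).factorial =
      288 * ((6 * k + 1) * (6 * k + 5)) * (6 * k).factorial *
        (3 * (k + 1)).factorial * (2 * (k + 1)).factorial := by
    rw [show 6 * (k + 1) = 6 * k + 5 + 1 by ring, show 3 * (k + 1) = 3 * k + 2 + 1 by ring,
      show 2 * (k + 1) = 2 * k + 1 + 1 by ring]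
    push_cast [Nat.factorial_succ]
    ring
  have := Nat.factorial_ne_zero (3 * k)
  have := Nat.factorial_ne_zero (2 * k)
  have := Nat.factorial_ne_zero (3 * (k + 1))
  have := Nat.factorial_ne_zero (2 * (k + 1))
  simp only [cWK]
  field_simp
  linear_combination (-1 : ℂ) ^ (k + 1) * 288 ^ k * key

lemma one_sub_mul_qWK (k : ℕ) : (1 - 6 * (k : ℂ)) * qWK k = (1 + 6 * k) * cWK k := by
  have : (1 - 6 * (k : ℂ)) ≠ 0 := by
    rw [sub_ne_zero]
    exact_mod_cast (by omega : 1 ≠ 6 * k)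
  rw [qWK]
  field_simp

lemma two_mul_qWK_succ (k : ℕ) :
    2 * qWK (k + 1) = 2 * cWK (k + 1) + (6 * k + 1) * cWK k := by
  have hq := one_sub_mul_qWK (k + 1)
  push_cast at hq
  have : (6 * (k : ℂ) + 5) ≠ 0 := by norm_cast
  apply mul_left_cancel₀ this
  linear_combination (-2) * hq - mul_cWK_succ k

lemma two_mul_cWK_succ (k : ℕ) :
    2 * cWK (k + 1) = 2 * qWK (k + 1) + (6 * k - 1) * qWK k := by
  linear_combination -two_mul_qWK_succ k + one_sub_mul_qWK k

lemma two_mul_rescale_mk_qWK (a : ℂ) :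
    2 * rescale a (mk qWK) =
      (2 + C a * X) * rescale a (mk cWK) + 6 * C a * X * (X * d⁄dX ℂ (rescale a (mk cWK))) := by
  rw [← map_ofNat C 2, ← map_ofNat C 6]
  ext (_ | n)
  · simp only [coeff_rescale, coeff_mk, add_mul, mul_assoc, coeff_C_mul, map_add, coeff_zero_X_mul]
    simp [qWK]
  · simp only [coeff_rescale, coeff_mk, add_mul, mul_assoc, coeff_C_mul, map_add, coeff_succ_X_mul,
      coeff_X_mul_derivative]
    linear_combination a ^ (n + 1) * two_mul_qWK_succ n

lemma two_mul_rescale_mk_cWK (a : ℂ) :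
    2 * rescale a (mk cWK) =
      (2 - C a * X) * rescale a (mk qWK) + 6 * C a * X * (X * d⁄dX ℂ (rescale a (mk qWK))) := by
  rw [← map_ofNat C 2, ← map_ofNat C 6]
  ext (_ | n)
  · simp only [coeff_rescale, coeff_mk, sub_mul, mul_assoc, coeff_C_mul, map_add, map_sub,
      coeff_zero_X_mul]
    simp [qWK]
  · simp only [coeff_rescale, coeff_mk, sub_mul, mul_assoc, coeff_C_mul, map_add, map_sub,
      coeff_succ_X_mul, coeff_X_mul_derivative]
    linear_combination a ^ (n + 1) * two_mul_cWK_succ n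

theorem wronskian_mk_cWK_mk_qWK :
    mk cWK * rescale (-1) (mk qWK) + rescale (-1) (mk cWK) * mk qWK = 2 := by
  have hc := two_mul_rescale_mk_cWK 1
  have hq := two_mul_rescale_mk_qWK 1
  have hc' := two_mul_rescale_mk_cWK (-1)
  have hq' := two_mul_rescale_mk_qWK (-1)
  simp only [rescale_one, RingHom.id_apply, map_one, map_neg] at hc hq hc' hq'
  have hX : (6 : ℂ⟦X⟧) * X ^ 2 ≠ 0 := mul_ne_zero (by norm_num) (pow_ne_zero _ X_ne_zero)
  have hderiv : d⁄dX ℂ (mk cWK * rescale (-1) (mk qWK) + rescale (-1) (mk cWK) * mk qWK) = 0 := by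
    refine (mul_eq_zero.mp ?_).resolve_left hX
    simp only [map_add, Derivation.leibniz, smul_eq_mul]
    linear_combination
      -rescale (-1) (mk qWK) * hq + mk cWK * hc' + mk qWK * hq' - rescale (-1) (mk cWK) * hc
  rw [← map_ofNat C 2]
  refine derivative.ext (hderiv.trans derivative_C.symm) ?_
  simp only [map_add, map_mul, ← coeff_zero_eq_constantCoeff_apply, coeff_rescale, coeff_mk, coeff_C]
  norm_num [cWK, qWK]

theorem evenSeries_mul_sub_X_mul_oddSeries :
    evenSeries cWK * evenSeries qWK - X * oddSeries cWK * oddSeries qWK = 1 := by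
  apply expand_injective two_ne_zero
  apply mul_left_cancel₀ (two_ne_zero : (2 : ℂ⟦X⟧) ≠ 0)
  have hW := wronskian_mk_cWK_mk_qWK
  rw [mk_eq_expand_evenSeries_add_X_mul cWK, mk_eq_expand_evenSeries_add_X_mul qWK] at hW
  simp only [map_add, map_mul, rescale_neg_one_X, rescale_neg_one_expand_two] at hW
  simp only [map_sub, map_mul, expand_X, map_one]
  linear_combination hW

/-- The determinant of the `G`-matrix of the Witten–Kontsevich point equals `1`. -/
theorem WK_G_matrix_det_eq_one (G : Matrix (Fin 2) (Fin 2) (PowerSeries ℂ))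
    (h11 : ∀ n : ℕ, PowerSeries.coeff n (G 0 0) =
      if n % 3 = 0 then cWK (2 * (n / 3)) else 0)
    (h12 : ∀ n : ℕ, PowerSeries.coeff n (G 0 1) =
      if n % 3 = 1 then qWK (2 * (n / 3) + 1) else 0)
    (h21 : ∀ n : ℕ, PowerSeries.coeff n (G 1 0) =
      if n % 3 = 2 then cWK (2 * (n / 3) + 1) else 0)
    (h22 : ∀ n : ℕ, PowerSeries.coeff n (G 1 1) =
      if n % 3 = 0 then qWK (2 * (n / 3)) else 0) :
    G.det = 1 := by
  have h3 : (3 : ℕ) ≠ 0 := three_ne_zero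
  rw [Matrix.det_fin_two,
    eq_X_pow_mul_expand_mk h3 (by norm_num) (f := fun k => cWK (2 * k)) h11,
    eq_X_pow_mul_expand_mk h3 (by norm_num) (f := fun k => qWK (2 * k + 1)) h12,
    eq_X_pow_mul_expand_mk h3 (by norm_num) (f := fun k => cWK (2 * k + 1)) h21,
    eq_X_pow_mul_expand_mk h3 (by norm_num) (f := fun k => qWK (2 * k)) h22]
  have h := congrArg (expand 3 h3) evenSeries_mul_sub_X_mul_oddSeries
  simp only [evenSeries, oddSeries, map_sub, map_mul, expand_X, map_one] at h
  linear_combination h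
end
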